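/- Fix 0 < n < m, covariates x_1, …, x_m ∈ ℝ^k, and |A| > 0. For every β ∈ ℝ^{k+1}, the Hessian matrix of the function γ ↦ l_ppm(γ − J_m; 1) (all weights 1) evaluated at γ = β + J_{|A|} equals the Hessian matrix of the function β ↦ l_ppm(β; (|A|/m)·1) (all weights |A|/m) evaluated at β. Consequently, the Fisher information matrices (negative Hessians) of the unit-weight model at its maximizer γ̂ = β̂ + J_{|A|} and of the equally-weighted model at its maximizer β̂ are equal, so the two fits yield identical standard errors. -/

import Mathlib

open Real Finset Filter

noncomputable section

/-- The intensity `λ_i(β) = exp(β_0 + Σ_{j=1}^k x_{ij} β_j)`. -/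
def lam {k : ℕ} (x : ℕ → Fin k → ℝ) (β : Fin (k + 1) → ℝ) (i : ℕ) : ℝ :=
  Real.exp (β 0 + ∑ j : Fin k, x i j * β j.succ)

/-- The weighted Poisson point-process log-likelihood
`l_ppm(β; w) = Σ_{i=1}^n log λ_i(β) − Σ_{i=1}^m w_i λ_i(β)`
(points are indexed `0, …, m-1`, the presences being `0, …, n-1`). -/
def lppm {k : ℕ} (n m : ℕ) (x : ℕ → Fin k → ℝ) (w : ℕ → ℝ) (β : Fin (k + 1) → ℝ) : ℝ :=
  (∑ i ∈ Finset.range n, Real.log (lam x β i)) - ∑ i ∈ Finset.range m, w i * lam x β i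

/-- The vector `J_c = (log c, 0, …, 0) ∈ ℝ^{k+1}`. -/
def Jvec {k : ℕ} (c : ℝ) : Fin (k + 1) → ℝ := fun j => if j = 0 then Real.log c else 0


/-!
Subtracting `J_c` from the parameter divides every intensity by `c`, so both
`γ ↦ l_ppm(γ - J_m; 1)` and `γ ↦ l_ppm(γ - J_{|A|}; (|A|/m)·1)` equal the likelihood with
weights `1/m`, up to additive constants. Hessians ignore additive constants and commute
with translations, which gives the identity at `γ = β + J_{|A|}`.
-/

section IteratedFDeriv

variable {𝕜 E F : Type*} [NontriviallyNormedField 𝕜] [NormedAddCommGroup E] [NormedSpace 𝕜 E]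
  [NormedAddCommGroup F] [NormedSpace 𝕜 F]

theorem iteratedFDeriv_add_const_of_ne {n : ℕ} (hn : n ≠ 0) (f : E → F) (c : F) :
    iteratedFDeriv 𝕜 n (fun y => f y + c) = iteratedFDeriv 𝕜 n f := by
  obtain ⟨n, rfl⟩ := Nat.exists_eq_succ_of_ne_zero hn
  ext1 x
  simp only [iteratedFDeriv_succ_eq_comp_right, Function.comp_apply, fderiv_add_const]

end IteratedFDeriv

section Jvec

variable {k : ℕ} (x : ℕ → Fin k → ℝ) (β : Fin (k + 1) → ℝ) {c : ℝ}

theorem lam_pos (i : ℕ) : 0 < lam x β i := exp_pos _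

theorem lam_sub_Jvec (hc : 0 < c) (i : ℕ) : lam x (β - Jvec c) i = lam x β i / c := by
  have hsum : ∑ j : Fin k, x i j * (β - Jvec (k := k) c) j.succ =
      ∑ j : Fin k, x i j * β j.succ := by
    simp [Jvec, Fin.succ_ne_zero]
  rw [lam, lam, hsum, Pi.sub_apply, Jvec, if_pos rfl, sub_add_eq_add_sub, exp_sub, exp_log hc]

theorem log_lam_sub_Jvec (hc : 0 < c) (i : ℕ) :
    log (lam x (β - Jvec c) i) = log (lam x β i) - log c := by
  rw [lam_sub_Jvec x β hc, log_div (lam_pos x β i).ne' hc.ne']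

theorem lppm_sub_Jvec (n m : ℕ) (w : ℕ → ℝ) (hc : 0 < c) :
    lppm n m x w (β - Jvec c) = lppm n m x (fun i => w i / c) β - n * log c := by
  simp_rw [lppm, log_lam_sub_Jvec x β hc, lam_sub_Jvec x β hc, sum_sub_distrib, sum_const,
    card_range, nsmul_eq_mul, mul_div_assoc', div_mul_eq_mul_div]
  ring

end Jvec

theorem stmt_2_general {k : ℕ} (n m : ℕ) (hnm : n < m)
    (x : ℕ → Fin k → ℝ) (A : ℝ) (hA : 0 < A) (β : Fin (k + 1) → ℝ) :
    iteratedFDeriv ℝ 2 (fun γ : Fin (k + 1) → ℝ => lppm n m x (fun _ => 1) (γ - Jvec (m : ℝ)))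
        (β + Jvec A) =
      iteratedFDeriv ℝ 2 (fun β' : Fin (k + 1) → ℝ => lppm n m x (fun _ => A / m) β') β := by
  have hm : (0 : ℝ) < m := Nat.cast_pos.mpr (Nat.zero_lt_of_lt hnm)
  have hweights : (fun _ : ℕ => A / m / A) = fun _ => 1 / (m : ℝ) := by
    funext; field_simp
  have hshift : (fun γ : Fin (k + 1) → ℝ => lppm n m x (fun _ => 1) (γ - Jvec (m : ℝ))) =
      fun γ => lppm n m x (fun _ => A / m) (γ - Jvec A) + n * (log A - log m) := by
    funext γ
    rw [lppm_sub_Jvec x γ n m _ hm, lppm_sub_Jvec x γ n m _ hA, hweights]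
    ring
  rw [hshift, iteratedFDeriv_add_const_of_ne two_ne_zero, iteratedFDeriv_comp_sub,
    add_sub_cancel_right]

/-- For every `β`, the Hessian of the unit-weight likelihood `γ ↦ l_ppm(γ − J_m; 1)`
evaluated at `γ = β + J_{|A|}` equals the Hessian of the equally-weighted likelihood
`β ↦ l_ppm(β; (|A|/m)·1)` evaluated at `β`.  Consequently the Fisher information
matrices (negative Hessians) of the two fits at their respective maximizers are
equal, so they yield identical standard errors. -/
theorem stmt_2 {k : ℕ} (n m : ℕ) (hn : 0 < n) (hnm : n < m)
    (x : ℕ → Fin k → ℝ) (A : ℝ) (hA : 0 < A) (β : Fin (k + 1) → ℝ) :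
    iteratedFDeriv ℝ 2 (fun γ : Fin (k + 1) → ℝ => lppm n m x (fun _ => 1) (γ - Jvec (m : ℝ)))
        (β + Jvec A) =
      iteratedFDeriv ℝ 2 (fun β' : Fin (k + 1) → ℝ => lppm n m x (fun _ => A / m) β') β :=
  stmt_2_general n m hnm x A hA β
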